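/- With aₘ = 1 + 1/2 + ... + 1/m and the function φ for the standard compactification of ℝˢ (s ≥ 2), for every unit vector x the sequence (aᵢ·x)ᵢ is a Cauchy sequence in (ℝˢ, d^φ). -/

import Mathlib

noncomputable def deltaPhi {X : Type*} [MetricSpace X] (m : X) (φ : X → X → ℝ) (x y : X) : ℝ :=
  min (dist x y) (1 / (1 + dist m x) + φ x y + 1 / (1 + dist m y))

noncomputable def dPhi {X : Type*} [MetricSpace X] (m : X) (φ : X → X → ℝ) (x y : X) : ℝ :=
  sInf { r : ℝ | ∃ (n : ℕ) (f : ℕ → X), 1 ≤ n ∧ f 0 = x ∧ f n = y ∧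
    r = ∑ i ∈ Finset.range n, deltaPhi m φ (f i) (f (i + 1)) }

/-- aₘ = 1 + 1/2 + ⋯ + 1/m. -/
noncomputable def harm (m : ℕ) : ℝ := ∑ k ∈ Finset.range m, (1 : ℝ) / (k + 1)

-- The function φ for the standard compactification of ℝˢ:
-- φ(x,y) = 0 if y = (a_q/a_p) x for some p,q ≥ 1; φ(x,y) = (1/aₘ)|x−y| if x,y
-- lie on the sphere Sₘ of radius aₘ (note ‖x‖ = aₘ there); |x−y| otherwise.
open Classical in
noncomputable def phiStd (s : ℕ) (x y : EuclideanSpace ℝ (Fin s)) : ℝ :=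
  if ∃ p q : ℕ, 1 ≤ p ∧ 1 ≤ q ∧ y = (harm q / harm p) • x then 0
  else if ∃ m : ℕ, 1 ≤ m ∧ ‖x‖ = harm m ∧ ‖y‖ = harm m then (1 / ‖x‖) * ‖x - y‖
  else ‖x - y‖

/-!
The points `aᵢ • x` all lie on one ray through the origin, on which `φ` vanishes. Hence the
one-step chain already gives `d^φ(aᵢ x, aⱼ x) ≤ 1 / (1 + aᵢ) + 1 / (1 + aⱼ)`, and this tends to
`0` because the harmonic numbers diverge.
-/

open Filter Topology

section Chains

variable {X : Type*} [MetricSpace X] {m : X} {φ : X → X → ℝ}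

lemma deltaPhi_nonneg (hφ : ∀ x y, 0 ≤ φ x y) (x y : X) : 0 ≤ deltaPhi m φ x y :=
  le_min dist_nonneg (by have := hφ x y; positivity)

lemma deltaPhi_le_of_phi_eq_zero {x y : X} (h : φ x y = 0) :
    deltaPhi m φ x y ≤ 1 / (1 + dist m x) + 1 / (1 + dist m y) := by
  simp [deltaPhi, h]

lemma dPhi_le_deltaPhi (hφ : ∀ x y, 0 ≤ φ x y) (x y : X) :
    dPhi m φ x y ≤ deltaPhi m φ x y := by
  refine csInf_le ⟨0, ?_⟩ ⟨1, fun n => if n = 0 then x else y, le_rfl, by simp, by simp, by simp⟩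
  rintro r ⟨n, f, -, -, -, rfl⟩
  exact Finset.sum_nonneg fun k _ => deltaPhi_nonneg hφ _ _

end Chains

lemma harm_nonneg (m : ℕ) : 0 ≤ harm m :=
  Finset.sum_nonneg fun _ _ => by positivity

lemma harm_pos {m : ℕ} (hm : 1 ≤ m) : 0 < harm m :=
  Finset.sum_pos (fun _ _ => by positivity) ⟨0, Finset.mem_range.mpr hm⟩

lemma tendsto_one_div_one_add_harm_atTop_zero :
    Tendsto (fun n => 1 / (1 + harm n)) atTop (𝓝 0) := by
  simpa only [one_div, harm, Function.comp_def] using tendsto_inv_atTop_zero.comp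
    (tendsto_atTop_add_const_left atTop 1 Real.tendsto_sum_range_one_div_nat_succ_atTop)

lemma phiStd_nonneg (s : ℕ) (x y : EuclideanSpace ℝ (Fin s)) : 0 ≤ phiStd s x y := by
  unfold phiStd
  split_ifs <;> positivity

lemma phiStd_harm_smul {s : ℕ} (x : EuclideanSpace ℝ (Fin s)) {i j : ℕ} (hi : 1 ≤ i)
    (hj : 1 ≤ j) : phiStd s (harm i • x) (harm j • x) = 0 := by
  rw [phiStd, if_pos ⟨i, j, hi, hj, by rw [smul_smul, div_mul_cancel₀ _ (harm_pos hi).ne']⟩]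

lemma dist_zero_harm_smul {s : ℕ} {x : EuclideanSpace ℝ (Fin s)} (hx : ‖x‖ = 1) (i : ℕ) :
    dist 0 (harm i • x) = harm i := by
  rw [dist_zero_left, norm_smul, hx, mul_one, Real.norm_of_nonneg (harm_nonneg i)]

theorem stmt11_general (s : ℕ) (x : EuclideanSpace ℝ (Fin s)) (hx : ‖x‖ = 1) :
    ∀ ε > (0 : ℝ), ∃ N : ℕ, ∀ i ≥ N, ∀ j ≥ N,
      dPhi (0 : EuclideanSpace ℝ (Fin s)) (phiStd s) (harm i • x) (harm j • x) < ε := by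
  intro ε hε
  obtain ⟨N, hN⟩ := eventually_atTop.mp
    ((tendsto_one_div_one_add_harm_atTop_zero.eventually (gt_mem_nhds (half_pos hε))).and
      (eventually_ge_atTop 1))
  refine ⟨N, fun i hi j hj => ?_⟩
  have hbound := deltaPhi_le_of_phi_eq_zero (m := 0)
    (phiStd_harm_smul x (hN i hi).2 (hN j hj).2)
  rw [dist_zero_harm_smul hx, dist_zero_harm_smul hx] at hbound
  calc dPhi 0 (phiStd s) (harm i • x) (harm j • x)
      ≤ deltaPhi 0 (phiStd s) (harm i • x) (harm j • x) := dPhi_le_deltaPhi (phiStd_nonneg s) _ _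
    _ ≤ 1 / (1 + harm i) + 1 / (1 + harm j) := hbound
    _ < ε := by linarith [(hN i hi).1, (hN j hj).1]

/-- For every unit vector x, the sequence (aᵢ • x) is Cauchy in (ℝˢ, d^φ). -/
theorem stmt11 (s : ℕ) (hs : 2 ≤ s) (x : EuclideanSpace ℝ (Fin s)) (hx : ‖x‖ = 1) :
    ∀ ε > (0 : ℝ), ∃ N : ℕ, ∀ i ≥ N, ∀ j ≥ N,
      dPhi (0 : EuclideanSpace ℝ (Fin s)) (phiStd s) (harm i • x) (harm j • x) < ε :=
  stmt11_general s x hx
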